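/- arXiv:1701.02176 — 7 statements merged into one kernel-verified Lean document; each statement's English description precedes it below -/
import Mathlib

section
/- Suppose the linear map Θ : E → E/T ⊕ E/U, v ↦ (v + T, v + U), is an isomorphism. Then δ ≥ 0; more precisely, δ = Σ_{n≥0} (dim((E/U)ⁿ) − dim(Tⁿ)), a finite sum all of whose terms are nonnegative. (Lemma 9.1 of the paper, second conclusion, together with the Abel-summation identity established in its proof.) -/
/-- Abel summation identity. -/
lemma abel_sum_aux (d : ℕ → ℤ) (K : ℕ) :
    ∑ n ∈ Finset.range (K + 1), (n : ℤ) * (d (n - 1) - d n)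
      = (∑ n ∈ Finset.range (K + 1), d n) - (K + 1) * d K := by
  induction K with
  | zero => simp
  | succ k ih =>
      rw [Finset.sum_range_succ, ih, Finset.sum_range_succ (f := d) (n := k + 1)]
      have h : (k + 1 : ℕ) - 1 = k := rfl
      rw [h]
      push_cast
      ring

/-- A finitely generated submodule below the supremum of a monotone family lies
below some member of the family. -/
lemma fg_le_of_le_iSup_aux {R M : Type*} [Ring R] [AddCommGroup M] [Module R M]
    (G : ℕ → Submodule R M) (hG : Monotone G) (p : Submodule R M) (hp : p.FG)
    (hle : p ≤ ⨆ n, G n) : ∃ N, p ≤ G N := by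
  have hc := (Submodule.fg_iff_compact p).mp hp
  rw [CompleteLattice.isCompactElement_iff_le_of_directed_sSup_le] at hc
  obtain ⟨x, ⟨i, rfl⟩, hx⟩ := hc (Set.range G) (Set.range_nonempty G)
    hG.directed_le.directedOn_range (by rwa [sSup_range])
  exact ⟨i, hx⟩

/-- Lemma 9.1 (second conclusion): if `Θ : E → E/T ⊕ E/U` is an isomorphism, then
`δ := Σ_{n>0} n·(dim(Tⁿ/Tⁿ⁻¹) − dim((E/U)ⁿ/(E/U)ⁿ⁻¹))` satisfies
`δ = Σ_{n≥0} (dim (E/U)ⁿ − dim Tⁿ)`, each term of the latter sum is nonnegative,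
and hence `δ ≥ 0`.  Here `Tⁿ = Eⁿ ∩ T`, `(E/U)ⁿ` is the image of `Eⁿ` in `E/U`, and
since the filtrations are increasing, `dim(Tⁿ/Tⁿ⁻¹) = dim Tⁿ − dim Tⁿ⁻¹` and
similarly for `(E/U)ⁿ`.  Both sums have finitely many nonzero terms. -/
theorem delta_nonneg_of_bijective
    (E : Type*) [AddCommGroup E] [Module ℂ E]
    (F : ℕ → Submodule ℂ E) (hFmono : Monotone F)
    (hF0 : F 0 = ⊥) (hFtop : (⨆ n, F n) = ⊤)
    (T U : Submodule ℂ E)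
    [FiniteDimensional ℂ T] [FiniteDimensional ℂ (E ⧸ U)]
    (hdim : Module.finrank ℂ T = Module.finrank ℂ (E ⧸ U))
    (hΘ : Function.Bijective (LinearMap.prod T.mkQ U.mkQ)) :
    let a : ℕ → ℤ := fun n => Module.finrank ℂ ↥(F n ⊓ T)
    let b : ℕ → ℤ := fun n => Module.finrank ℂ ↥((F n).map U.mkQ)
    let δ : ℤ := ∑ᶠ n : ℕ, (n : ℤ) * ((a n - a (n - 1)) - (b n - b (n - 1)))
    (δ = ∑ᶠ n : ℕ, (b n - a n)) ∧ (∀ n : ℕ, 0 ≤ b n - a n) ∧ 0 ≤ δ := by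
  intro a b δ
  -- T ⊓ U = ⊥ from injectivity of Θ
  have hTU : T ⊓ U = ⊥ := by
    have h := LinearMap.ker_eq_bot.mpr hΘ.injective
    rwa [LinearMap.ker_prod, Submodule.ker_mkQ, Submodule.ker_mkQ] at h
  -- key: a n ≤ b n
  have hab : ∀ n : ℕ, a n ≤ b n := by
    intro n
    have h1 : Module.finrank ℂ ↥(F n ⊓ T) ≤ Module.finrank ℂ ↥((F n).map U.mkQ) := by
      set f : ↥(F n ⊓ T) →ₗ[ℂ] E ⧸ U := U.mkQ.comp (F n ⊓ T).subtype with hf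
      have hinj : Function.Injective f := by
        rw [← LinearMap.ker_eq_bot, eq_bot_iff]
        rintro ⟨x, hx⟩ hxk
        have hxU : x ∈ U := by
          have h0 : U.mkQ x = 0 := hxk
          rwa [← Submodule.Quotient.mk_eq_zero U]
        have hx0 : x = 0 := by
          have hmem : x ∈ T ⊓ U := ⟨hx.2, hxU⟩
          rwa [hTU, Submodule.mem_bot] at hmem
        simpa using hx0
      have hrange : LinearMap.range f ≤ (F n).map U.mkQ := by
        rw [hf, LinearMap.range_comp, Submodule.range_subtype]
        exact Submodule.map_mono inf_le_left
      calc Module.finrank ℂ ↥(F n ⊓ T) = Module.finrank ℂ ↥(LinearMap.range f) :=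
            (LinearMap.finrank_range_of_inj hinj).symm
        _ ≤ Module.finrank ℂ ↥((F n).map U.mkQ) := Submodule.finrank_mono hrange
    simp only [a, b]
    exact_mod_cast h1
  have hTfg : T.FG := (Submodule.fg_top T).mp (Module.finite_def.mp ‹_›)
  -- stabilization: T ≤ F N₁ for some N₁
  obtain ⟨N₁, hN₁⟩ : ∃ N, T ≤ F N :=
    fg_le_of_le_iSup_aux F hFmono T hTfg (by rw [hFtop]; exact le_top)
  -- stabilization: (F N₂).map mkQ = ⊤ for some N₂
  obtain ⟨N₂, hN₂⟩ : ∃ N, (⊤ : Submodule ℂ (E ⧸ U)) ≤ (F N).map U.mkQ := by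
    apply fg_le_of_le_iSup_aux (fun n => (F n).map U.mkQ)
      (fun i j hij => Submodule.map_mono (hFmono hij)) ⊤
      (Module.finite_def.mp inferInstance)
    rw [← Submodule.map_iSup, hFtop, Submodule.map_top, Submodule.range_mkQ]
  set N := max N₁ N₂ with hN
  -- for n ≥ N, a n = finrank T and b n = finrank (E ⧸ U)
  have haN : ∀ n, N ≤ n → a n = Module.finrank ℂ T := by
    intro n hn
    have : F n ⊓ T = T := inf_eq_right.mpr ((hN₁.trans (hFmono ((le_max_left _ _).trans hn))))
    simp only [a]
    rw [this]
  have hbN : ∀ n, N ≤ n → b n = Module.finrank ℂ (E ⧸ U) := by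
    intro n hn
    have hle : (F n).map U.mkQ = ⊤ :=
      top_le_iff.mp ((hN₂.trans (Submodule.map_mono (hFmono ((le_max_right _ _).trans hn)))))
    simp only [b]
    rw [hle, finrank_top]
  set d : ℕ → ℤ := fun n => b n - a n with hd
  have hdN : ∀ n, N ≤ n → d n = 0 := by
    intro n hn
    simp [hd, haN n hn, hbN n hn, hdim]
  set c : ℕ → ℤ := fun n => (n : ℤ) * ((a n - a (n - 1)) - (b n - b (n - 1))) with hc
  have hcd : ∀ n, c n = (n : ℤ) * (d (n - 1) - d n) := by
    intro n; simp only [hc, hd]; ring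
  have hcN : ∀ n, N + 1 ≤ n → c n = 0 := by
    intro n hn
    rw [hcd, hdN n (by omega), hdN (n - 1) (by omega)]
    ring
  have hsc : Function.support c ⊆ (Finset.range (N + 1) : Finset ℕ) := by
    intro n hn
    simp only [Finset.coe_range, Set.mem_Iio]
    by_contra h
    exact hn (hcN n (by omega))
  have hsd : Function.support d ⊆ (Finset.range (N + 1) : Finset ℕ) := by
    intro n hn
    simp only [Finset.coe_range, Set.mem_Iio]
    by_contra h
    exact hn (hdN n (by omega))
  have hδ : δ = ∑ n ∈ Finset.range (N + 1), c n :=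
    finsum_eq_sum_of_support_subset c hsc
  have hδ2 : ∑ᶠ n : ℕ, (b n - a n) = ∑ n ∈ Finset.range (N + 1), d n :=
    finsum_eq_sum_of_support_subset d hsd
  have habel : ∑ n ∈ Finset.range (N + 1), c n = ∑ n ∈ Finset.range (N + 1), d n := by
    calc ∑ n ∈ Finset.range (N + 1), c n
        = ∑ n ∈ Finset.range (N + 1), (n : ℤ) * (d (n - 1) - d n) := by
          exact Finset.sum_congr rfl fun n _ => hcd n
      _ = (∑ n ∈ Finset.range (N + 1), d n) - (N + 1) * d N := abel_sum_aux d N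
      _ = ∑ n ∈ Finset.range (N + 1), d n := by rw [hdN N le_rfl]; ring
  have hpos : ∀ n : ℕ, 0 ≤ b n - a n := fun n => by
    have := hab n; omega
  refine ⟨by rw [hδ, hδ2, habel], hpos, ?_⟩
  rw [hδ, habel]
  exact Finset.sum_nonneg fun n _ => hpos n
end

section
/- Suppose the linear map Θ : E → E/T ⊕ E/U, v ↦ (v + T, v + U), is an isomorphism. Then the following three assertions are equivalent: (i) the graded linear map gr Θ̄ : gr T → gr(E/U) is an isomorphism; (ii) dim(Tⁿ) = dim((E/U)ⁿ) for every n ≥ 0; (iii) δ = 0. (Lemma 9.2 of the paper.) -/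
/-!
Since `Θ` is injective, `T ∩ U = 0`, so `Θ̄ : T → E/U` is injective and `a n := dim Tⁿ` is at most
`b n := dim (E/U)ⁿ`, with equality exactly when `Θ̄ (Tⁿ) = (E/U)ⁿ`. By induction on `n`, these
equalities are the same as the surjectivity of every graded piece of `gr Θ̄`, and they imply its
injectivity. Both filtrations stabilize at `T` and at `E/U`, which have the same dimension, so
`a n = b n` for large `n`; Abel summation then gives `δ = -∑ₙ (a n - b n)`, a sum of nonnegative
terms.
-/

open Module Submodule Finset

theorem Submodule.FG.exists_le_of_le_iSup {R M ι : Type*} [Semiring R] [AddCommMonoid M]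
    [Module R M] [Nonempty ι] {F : ι → Submodule R M} (hF : Directed (· ≤ ·) F)
    {S : Submodule R M} (hS : S.FG) (h : S ≤ ⨆ i, F i) : ∃ i, S ≤ F i := by
  have hc := (Submodule.fg_iff_compact S).mp hS
  rw [CompleteLattice.isCompactElement_iff_le_of_directed_sSup_le] at hc
  obtain ⟨_, ⟨i, rfl⟩, hi⟩ :=
    hc (Set.range F) (Set.range_nonempty F) (directedOn_range.mpr hF) (by rwa [sSup_range])
  exact ⟨i, hi⟩

theorem sum_range_succ_mul_sub_pred {R : Type*} [CommRing R] (d : ℕ → R) (N : ℕ) :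
    ∑ n ∈ range (N + 1), (n : R) * (d n - d (n - 1)) = N * d N - ∑ n ∈ range N, d n := by
  induction N with
  | zero => simp
  | succ N ih =>
    rw [sum_range_succ, ih, sum_range_succ, Nat.add_sub_cancel]
    push_cast
    ring

theorem finsum_mul_sub_pred_eq_neg_sum {R : Type*} [CommRing R] (d : ℕ → R) (N : ℕ)
    (hd : ∀ n, N ≤ n → d n = 0) :
    ∑ᶠ n : ℕ, (n : R) * (d n - d (n - 1)) = -∑ n ∈ range N, d n := by
  have hsupp : (Function.support fun n : ℕ ↦ (n : R) * (d n - d (n - 1))) ⊆ range (N + 1) := by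
    intro n hn
    by_contra hnN
    simp only [coe_range, Set.mem_Iio, not_lt] at hnN
    exact hn (by dsimp only; rw [hd n (by omega), hd (n - 1) (by omega), sub_zero, mul_zero])
  rw [finsum_eq_sum_of_support_subset _ hsupp, sum_range_succ_mul_sub_pred, hd N le_rfl,
    mul_zero, zero_sub]

namespace LinearMap

variable {R E M : Type*} [Ring R] [AddCommGroup E] [Module R E] [AddCommGroup M] [Module R M]

theorem finrank_map_of_disjoint_ker (f : E →ₗ[R] M) {W : Submodule R E}
    (hW : Disjoint W (ker f)) : finrank R (W.map f) = finrank R W := by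
  rw [← range_domRestrict]
  exact finrank_range_of_inj (injective_domRestrict_iff.mpr hW)

/-- The filtered map `T → M` induced by `f` (with `T` filtered by `F n ⊓ T` and `M` by the images
`f (F n)`) induces a bijection on every graded piece. -/
def GrBijective (f : E →ₗ[R] M) (F : ℕ → Submodule R E) (T : Submodule R E) : Prop :=
  ∀ n : ℕ, ((F (n + 1)).map f ≤ (F n).map f ⊔ (F (n + 1) ⊓ T).map f) ∧
    ∀ x : E, x ∈ F (n + 1) ⊓ T → f x ∈ (F n).map f → x ∈ F n

variable {f : E →ₗ[R] M} {F : ℕ → Submodule R E} {T : Submodule R E}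

theorem mem_of_apply_mem_map_inf (hT : Disjoint T (ker f)) {V : Submodule R E}
    (hV : (V ⊓ T).map f = V.map f) {x : E} (hx : x ∈ T) (hfx : f x ∈ V.map f) : x ∈ V := by
  rw [← hV] at hfx
  obtain ⟨y, hy, hyx⟩ := hfx
  rw [← injOn_of_disjoint_ker le_rfl hT hy.2 hx hyx]
  exact hy.1

theorem map_inf_eq_map_of_le_sup (hF0 : F 0 = ⊥) (hF : Monotone F)
    (hsurj : ∀ n, (F (n + 1)).map f ≤ (F n).map f ⊔ (F (n + 1) ⊓ T).map f) (n : ℕ) :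
    (F n ⊓ T).map f = (F n).map f := by
  induction n with
  | zero => simp [hF0]
  | succ n ih =>
    refine le_antisymm (map_mono inf_le_left) ((hsurj n).trans (sup_le ?_ le_rfl))
    exact ih ▸ map_mono (inf_le_inf_right T (hF n.le_succ))

theorem grBijective_iff_map_inf_eq (hF0 : F 0 = ⊥) (hF : Monotone F) (hT : Disjoint T (ker f)) :
    GrBijective f F T ↔ ∀ n, (F n ⊓ T).map f = (F n).map f :=
  ⟨fun h ↦ map_inf_eq_map_of_le_sup hF0 hF fun n ↦ (h n).1, fun h n ↦
    ⟨h (n + 1) ▸ le_sup_right, fun _ hx ↦ mem_of_apply_mem_map_inf hT (h n) hx.2⟩⟩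

end LinearMap

section FiniteDimensional

open LinearMap

variable {K E M : Type*} [Field K] [AddCommGroup E] [Module K E] [AddCommGroup M] [Module K M]
  {f : E →ₗ[K] M} {T : Submodule K E}

theorem finrank_inf_le_finrank_map [FiniteDimensional K M] (hT : Disjoint T (ker f))
    (V : Submodule K E) : finrank K ↥(V ⊓ T) ≤ finrank K ↥(V.map f) := by
  rw [← finrank_map_of_disjoint_ker f (hT.mono_left inf_le_right)]
  exact finrank_mono (map_mono inf_le_left)

theorem finrank_inf_eq_finrank_map_iff [FiniteDimensional K M] (hT : Disjoint T (ker f))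
    (V : Submodule K E) : finrank K ↥(V ⊓ T) = finrank K ↥(V.map f) ↔ (V ⊓ T).map f = V.map f := by
  rw [← finrank_map_of_disjoint_ker f (hT.mono_left inf_le_right)]
  exact ⟨eq_of_le_of_finrank_eq (map_mono inf_le_left), fun h ↦ h ▸ rfl⟩

theorem exists_forall_finrank_inf_eq_finrank_map [FiniteDimensional K T] [FiniteDimensional K M]
    {F : ℕ → Submodule K E} (hF : Monotone F) (hFtop : ⨆ n, F n = ⊤) (hf : Function.Surjective f)
    (hdim : finrank K T = finrank K M) :
    ∃ N, ∀ n, N ≤ n → finrank K ↥(F n ⊓ T) = finrank K ↥((F n).map f) := by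
  obtain ⟨N₁, hN₁⟩ := (Module.Finite.iff_fg.mp inferInstance : T.FG).exists_le_of_le_iSup
    hF.directed_le (le_top.trans hFtop.ge)
  have hMtop : ⨆ n, (F n).map f = ⊤ := by
    rw [← Submodule.map_iSup, hFtop, Submodule.map_top, range_eq_top.mpr hf]
  have hfg : (⊤ : Submodule K M).FG := Module.finite_def.mp inferInstance
  have hFf : Monotone fun n ↦ (F n).map f := fun _ _ h ↦ map_mono (hF h)
  obtain ⟨N₂, hN₂⟩ := hfg.exists_le_of_le_iSup hFf.directed_le hMtop.ge
  refine ⟨max N₁ N₂, fun n hn ↦ ?_⟩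
  rw [inf_eq_right.mpr (hN₁.trans (hF (le_of_max_le_left hn))),
    top_le_iff.mp (hN₂.trans (map_mono (hF (le_of_max_le_right hn)))), finrank_top, hdim]

end FiniteDimensional

/-- Lemma 9.2: if `Θ : E → E/T ⊕ E/U` is an isomorphism, then the following are
equivalent:
(i) the graded map `gr Θ̄ : gr T → gr(E/U)` is an isomorphism, i.e. for every `n ≥ 1`
    the induced map `Tⁿ/Tⁿ⁻¹ → (E/U)ⁿ/(E/U)ⁿ⁻¹` is bijective — spelled out: it is
    surjective (`(E/U)ⁿ ⊆ (E/U)ⁿ⁻¹ + Θ̄(Tⁿ)`) and injective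
    (`x ∈ Tⁿ` with `Θ̄ x ∈ (E/U)ⁿ⁻¹` implies `x ∈ Tⁿ⁻¹`);
(ii) `dim Tⁿ = dim (E/U)ⁿ` for every `n`;
(iii) `δ = 0`.
Here `Tⁿ = Eⁿ ∩ T`, `(E/U)ⁿ` is the image of `Eⁿ` in `E/U`, `Θ̄ : T → E/U` is
`v ↦ v + U`, and `δ := Σ_{n>0} n·(dim(Tⁿ/Tⁿ⁻¹) − dim((E/U)ⁿ/(E/U)ⁿ⁻¹))`. -/
theorem grTheta_iso_iff_dim_eq_iff_delta_zero
    (E : Type*) [AddCommGroup E] [Module ℂ E]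
    (F : ℕ → Submodule ℂ E) (hFmono : Monotone F)
    (hF0 : F 0 = ⊥) (hFtop : (⨆ n, F n) = ⊤)
    (T U : Submodule ℂ E)
    [FiniteDimensional ℂ T] [FiniteDimensional ℂ (E ⧸ U)]
    (hdim : Module.finrank ℂ T = Module.finrank ℂ (E ⧸ U))
    (hΘ : Function.Bijective (LinearMap.prod T.mkQ U.mkQ)) :
    let a : ℕ → ℤ := fun n => Module.finrank ℂ ↥(F n ⊓ T)
    let b : ℕ → ℤ := fun n => Module.finrank ℂ ↥((F n).map U.mkQ)
    let δ : ℤ := ∑ᶠ n : ℕ, (n : ℤ) * ((a n - a (n - 1)) - (b n - b (n - 1)))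
    let grIso : Prop := ∀ n : ℕ,
      ((F (n + 1)).map U.mkQ ≤ ((F n).map U.mkQ) ⊔ ((F (n + 1) ⊓ T).map U.mkQ)) ∧
      (∀ x : E, x ∈ F (n + 1) ⊓ T → U.mkQ x ∈ (F n).map U.mkQ → x ∈ F n)
    (grIso ↔ ∀ n : ℕ, a n = b n) ∧ ((∀ n : ℕ, a n = b n) ↔ δ = 0) := by
  intro a b δ grIso
  have hTU : Disjoint T (LinearMap.ker U.mkQ) := by
    rw [ker_mkQ, disjoint_iff, ← ker_mkQ T, ← ker_mkQ U, ← LinearMap.ker_prod]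
    exact LinearMap.ker_eq_bot.mpr hΘ.1
  have hab : ∀ n, a n ≤ b n := fun n ↦
    Int.ofNat_le.mpr (finrank_inf_le_finrank_map hTU (F n))
  have hab_iff : ∀ n, a n = b n ↔ (F n ⊓ T).map U.mkQ = (F n).map U.mkQ := fun n ↦
    Int.natCast_inj.trans (finrank_inf_eq_finrank_map_iff hTU (F n))
  obtain ⟨N, hN⟩ := exists_forall_finrank_inf_eq_finrank_map hFmono hFtop U.mkQ_surjective hdim
  have hδ : δ = -∑ n ∈ range N, (a n - b n) := by
    rw [← finsum_mul_sub_pred_eq_neg_sum (fun n ↦ a n - b n) N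
      fun n hn ↦ sub_eq_zero.mpr (congrArg _ (hN n hn))]
    exact finsum_congr fun n ↦ by ring
  refine ⟨(LinearMap.grBijective_iff_map_inf_eq hF0 hFmono hTU).trans (forall_congr' hab_iff).symm,
    ⟨fun h ↦ by simp [hδ, h], fun h n ↦ ?_⟩⟩
  rw [hδ, neg_eq_zero, sum_eq_zero_iff_of_nonpos fun n _ ↦ sub_nonpos.mpr (hab n)] at h
  rcases lt_or_ge n N with hn | hn
  · exact sub_eq_zero.mp (h n (mem_range.mpr hn))
  · exact congrArg _ (hN n hn)
end

section
/- There exists a real constant K > 0 such that for every h ∈ V and every subset S ⊆ Φ⁺ one has K·‖h‖ − N ≤ Σ_{α ∈ Φ⁺∖S} |⟨h, α⟩| + Σ_{α ∈ S} |⟨h, α⟩ − 1| ≤ N + √2·N·‖h‖. (This is Lemma 10.2 of the paper: via the Iwahori–Matsumoto length formula, the middle quantity equals the length ℓ(h·ẇ) of an element of an untwisted affine Weyl group W = Q̇∨ ⋊ Ẇ, where S = {α ∈ Φ̇⁺ : ẇ⁻¹α ∈ Φ̇⁻}, so K‖h‖ − N ≤ ℓ(hẇ) ≤ N + √2 N ‖h‖.)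 -/
open scoped RealInnerProductSpace

-- auxiliary lemma: positivity of the L1-type seminorm on a spanning set
theorem aux_key
    (V : Type*) [NormedAddCommGroup V] [InnerProductSpace ℝ V]
    [FiniteDimensional ℝ V]
    (Φ : Finset V) (hspan : Submodule.span ℝ (Φ : Set V) = ⊤) :
    ∃ K : ℝ, 0 < K ∧ ∀ h : V, K * ‖h‖ ≤ ∑ α ∈ Φ, |⟪h, α⟫| := by
  set f : V → ℝ := fun h => ∑ α ∈ Φ, |⟪h, α⟫| with hf
  have hfnn : ∀ h, 0 ≤ f h := fun h => Finset.sum_nonneg fun _ _ => abs_nonneg _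
  by_cases hV : Subsingleton V
  · refine ⟨1, one_pos, fun h => ?_⟩
    have : h = 0 := Subsingleton.elim _ _
    simpa [this] using hfnn 0
  · have : Nontrivial V := not_subsingleton_iff_nontrivial.mp hV
    have hcont : Continuous f := by
      apply continuous_finset_sum
      intro α _
      exact (continuous_id.inner continuous_const).abs
    obtain ⟨x₀, hx₀, hmin⟩ := (isCompact_sphere (0:V) 1).exists_isMinOn
      (NormedSpace.sphere_nonempty.2 zero_le_one) hcont.continuousOn
    have hx₀n : ‖x₀‖ = 1 := by simpa using mem_sphere_zero_iff_norm.mp hx₀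
    have hK : 0 < f x₀ := by
      rcases (hfnn x₀).lt_or_eq with h | h
      · exact h
      · exfalso
        have hall : ∀ α ∈ Φ, ⟪x₀, α⟫ = 0 := by
          intro α hα
          exact abs_eq_zero.mp
            ((Finset.sum_eq_zero_iff_of_nonneg fun _ _ => abs_nonneg _).mp h.symm α hα)
        have hx : x₀ ∈ Submodule.span ℝ (Φ : Set V) := hspan ▸ Submodule.mem_top
        have hzero : ⟪x₀, x₀⟫ = 0 := by
          have key : ∀ v ∈ Submodule.span ℝ (Φ : Set V), ⟪x₀, v⟫ = 0 := by
            intro v hv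
            induction hv using Submodule.span_induction with
            | mem w hw => exact hall w hw
            | zero => simp
            | add u w _ _ hu hw => simp [inner_add_right, hu, hw]
            | smul c w _ hw => simp [inner_smul_right, hw]
          exact key x₀ hx
        have : x₀ = 0 := by
          have := inner_self_eq_zero.mp hzero
          exact this
        simp [this] at hx₀n
    refine ⟨f x₀, hK, fun h => ?_⟩
    rcases eq_or_ne h 0 with rfl | hne
    · simp [hfnn]
    · have hc : (0:ℝ) < ‖h‖ := norm_pos_iff.mpr hne
      set u : V := ‖h‖⁻¹ • h with hu
      have hun : ‖u‖ = 1 := by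
        rw [hu, norm_smul, norm_inv, norm_norm, inv_mul_cancel₀ hc.ne']
      have hmem : u ∈ Metric.sphere (0:V) 1 := by
        simpa [mem_sphere_zero_iff_norm] using hun
      have hle : f x₀ ≤ f u := hmin hmem
      have hfh : f h = ‖h‖ * f u := by
        rw [hf]
        simp only [Finset.mul_sum]
        apply Finset.sum_congr rfl
        intro α _
        rw [hu, real_inner_smul_left, abs_mul, abs_inv, abs_norm]
        field_simp
      show f x₀ * ‖h‖ ≤ f h
      rw [hfh]
      nlinarith


/-- Lemma 10.2: for a finite spanning subset `Φ⁺` of a Euclidean space with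
`‖α‖² ≤ 2` for all `α ∈ Φ⁺` and `N = #Φ⁺`, there is a constant `K > 0` such that for
every `h` and every `S ⊆ Φ⁺`,
`K‖h‖ − N ≤ Σ_{α ∈ Φ⁺∖S} |⟨h,α⟩| + Σ_{α ∈ S} |⟨h,α⟩ − 1| ≤ N + √2·N·‖h‖`.
(Via the Iwahori–Matsumoto formula the middle quantity is the length `ℓ(h·ẇ)` in an
untwisted affine Weyl group.) -/
theorem affine_length_bounds
    (V : Type*) [DecidableEq V] [NormedAddCommGroup V] [InnerProductSpace ℝ V]
    [FiniteDimensional ℝ V]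
    (Φ : Finset V) (hspan : Submodule.span ℝ (Φ : Set V) = ⊤)
    (hnorm : ∀ α ∈ Φ, ‖α‖ ^ 2 ≤ 2) :
    ∃ K : ℝ, 0 < K ∧ ∀ h : V, ∀ S : Finset V, S ⊆ Φ →
      (K * ‖h‖ - (Φ.card : ℝ) ≤
        (∑ α ∈ Φ \ S, |⟪h, α⟫|) + ∑ α ∈ S, |⟪h, α⟫ - 1|) ∧
      ((∑ α ∈ Φ \ S, |⟪h, α⟫|) + ∑ α ∈ S, |⟪h, α⟫ - 1| ≤
        (Φ.card : ℝ) + Real.sqrt 2 * (Φ.card : ℝ) * ‖h‖) := by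
  obtain ⟨K, hKpos, hK⟩ := aux_key V Φ hspan
  refine ⟨K, hKpos, fun h S hS => ?_⟩
  have hcardS : (S.card : ℝ) ≤ (Φ.card : ℝ) := by
    exact_mod_cast Finset.card_le_card hS
  have hsplit : (∑ α ∈ Φ \ S, |⟪h, α⟫|) + ∑ α ∈ S, |⟪h, α⟫| = ∑ α ∈ Φ, |⟪h, α⟫| :=
    Finset.sum_sdiff hS
  constructor
  · -- lower bound
    have h1 : ∑ α ∈ S, (|⟪h, α⟫| - 1) ≤ ∑ α ∈ S, |⟪h, α⟫ - 1| := by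
      apply Finset.sum_le_sum
      intro α _
      calc |⟪h, α⟫| - 1 = |⟪h, α⟫| - |(1:ℝ)| := by norm_num
        _ ≤ |⟪h, α⟫ - 1| := abs_sub_abs_le_abs_sub _ _
    rw [Finset.sum_sub_distrib, Finset.sum_const, nsmul_eq_mul, mul_one] at h1
    have h2 := hK h
    linarith
  · -- upper bound
    have hterm : ∀ α ∈ Φ, |⟪h, α⟫| ≤ Real.sqrt 2 * ‖h‖ := by
      intro α hα
      have hα2 : ‖α‖ ≤ Real.sqrt 2 := by
        rw [show (2:ℝ) = (Real.sqrt 2) ^ 2 by rw [Real.sq_sqrt]; norm_num] at hnorm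
        have h2 := hnorm α hα
        nlinarith [Real.sqrt_nonneg 2, norm_nonneg α]
      calc |⟪h, α⟫| ≤ ‖h‖ * ‖α‖ := abs_real_inner_le_norm _ _
        _ ≤ ‖h‖ * Real.sqrt 2 := by nlinarith [norm_nonneg h]
        _ = Real.sqrt 2 * ‖h‖ := mul_comm _ _
    have hb1 : ∑ α ∈ Φ \ S, |⟪h, α⟫| ≤ ((Φ \ S).card : ℝ) * (Real.sqrt 2 * ‖h‖) := by
      calc ∑ α ∈ Φ \ S, |⟪h, α⟫| ≤ ∑ _α ∈ Φ \ S, Real.sqrt 2 * ‖h‖ :=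
            Finset.sum_le_sum fun α hα => hterm α (Finset.mem_sdiff.mp hα).1
        _ = ((Φ \ S).card : ℝ) * (Real.sqrt 2 * ‖h‖) := by
            rw [Finset.sum_const, nsmul_eq_mul]
    have hb2 : ∑ α ∈ S, |⟪h, α⟫ - 1| ≤ (S.card : ℝ) * (Real.sqrt 2 * ‖h‖ + 1) := by
      calc ∑ α ∈ S, |⟪h, α⟫ - 1| ≤ ∑ α ∈ S, (Real.sqrt 2 * ‖h‖ + 1) := by
            apply Finset.sum_le_sum
            intro α hα
            have h1 : |⟪h, α⟫ - 1| ≤ |⟪h, α⟫| + |(1:ℝ)| := abs_sub _ _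
            have h2 := hterm α (hS hα)
            simp only [abs_one] at h1
            linarith
        _ = (S.card : ℝ) * (Real.sqrt 2 * ‖h‖ + 1) := by
            rw [Finset.sum_const, nsmul_eq_mul]
    have hcard : ((Φ \ S).card : ℝ) + (S.card : ℝ) = (Φ.card : ℝ) := by
      have := Finset.card_sdiff_add_card_eq_card hS
      exact_mod_cast congrArg (Nat.cast (R := ℝ)) this
    have hnn : (0:ℝ) ≤ Real.sqrt 2 * ‖h‖ := by positivity
    nlinarith [(Φ \ S).card.cast_nonneg (α := ℝ), S.card.cast_nonneg (α := ℝ)]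
end

section
/- Let A be an integral domain which is a finitely generated ℂ-algebra. Then the maximal spectrum of A is not the union of countably many proper closed subsets: if (Zₙ)_{n∈ℕ} is a countable family of Zariski-closed subsets of the maximal spectrum of A whose union is the whole maximal spectrum, then Zₙ equals the whole maximal spectrum for some n. (This is the key uncountability fact — an irreducible complex variety is not a countable union of proper closed subvarieties — proved and used in the paper's Lemmas 2.1, 2.2 and 2.3 on ind-varieties; it relies on ℂ being uncountable.) -/
/-!
A maximal ideal avoiding countably many nonzero elements `aₙ` is found by localizing at the
monoid they generate: the localization still has countable dimension over `ℂ`, so each of its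
residue fields is an extension of `ℂ` of countable dimension. Such an extension is algebraic,
since a transcendental `x` would give the uncountable linearly independent family `1 / (x - c)`,
hence it is `ℂ` itself. Pulling back to `A` yields a maximal ideal containing no `aₙ`, i.e. a
point outside every proper closed set `Zₙ`, each of which lies in some `V(aₙ)`.
-/

open Cardinal

instance Complex.instUncountable : Uncountable ℂ :=
  Complex.ofReal_injective.uncountable

theorem Submonoid.countable_closure {M : Type*} [Monoid M] {s : Set M} (hs : s.Countable) :
    (closure s : Set M).Countable := by
  have := hs.to_subtype
  rw [closure_eq_mrange]
  exact Set.countable_range _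

theorem Algebra.FiniteType.rank_le_aleph0 (K A : Type*) [Field K] [CommRing A] [Algebra K A]
    [Algebra.FiniteType K A] : Module.rank K A ≤ ℵ₀ := by
  obtain ⟨s, hs⟩ := Algebra.FiniteType.out (R := K) (A := A)
  have hspan : Submodule.span K (Submonoid.closure (s : Set A) : Set A) = ⊤ := by
    rw [← Algebra.adjoin_eq_span, hs, Algebra.top_toSubmodule]
  calc Module.rank K A = Module.rank K (⊤ : Submodule K A) := (rank_top K A).symm
    _ = Module.rank K (Submodule.span K (Submonoid.closure (s : Set A) : Set A)) := by rw [hspan]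
    _ ≤ _ := rank_span_le _
    _ ≤ ℵ₀ := mk_le_aleph0_iff.mpr (Submonoid.countable_closure s.countable_toSet).to_subtype

theorem Localization.rank_le_cardinalMk_mul {K A : Type*} [Field K] [CommRing A] [Algebra K A]
    (S : Submonoid A) : Module.rank K (Localization S) ≤ #S * Module.rank K A := by
  let f : (S →₀ A) →ₗ[K] Localization S := Finsupp.lsum K fun t =>
    LinearMap.mulRight K (Localization.mk 1 t) ∘ₗ (IsScalarTower.toAlgHom K A _).toLinearMap
  have hf : Function.Surjective f := by
    intro y
    induction y using Localization.induction_on with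
    | H p =>
      refine ⟨Finsupp.single p.2 p.1, ?_⟩
      simp only [f, Finsupp.lsum_single, LinearMap.coe_comp, Function.comp_apply,
        AlgHom.toLinearMap_apply, IsScalarTower.coe_toAlgHom', LinearMap.mulRight_apply]
      rw [← Localization.mk_one_eq_algebraMap, Localization.mk_mul, mul_one, one_mul]
  simpa [rank_finsupp] using f.rank_le_of_surjective hf

theorem Algebra.isAlgebraic_of_lift_rank_lt {K L : Type*} [Field K] [Field L] [Algebra K L]
    (h : lift.{u_1} (Module.rank K L) < lift.{u_2} #K) : Algebra.IsAlgebraic K L :=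
  ⟨fun x => not_not.mp fun hx => h.not_ge
    (show Transcendental K x from hx).linearIndependent_sub_inv.cardinal_lift_le_rank⟩

theorem IsAlgClosed.algebraMap_surjective_of_rank_le_aleph0 {K L : Type*} [Field K]
    [IsAlgClosed K] [Uncountable K] [Field L] [Algebra K L] (h : Module.rank K L ≤ ℵ₀) :
    Function.Surjective (algebraMap K L) :=
  have : Algebra.IsAlgebraic K L := Algebra.isAlgebraic_of_lift_rank_lt <|
    (lift_le_aleph0.mpr h).trans_lt (by simp [aleph0_lt_mk_iff.mpr ‹Uncountable K›])
  IsAlgClosed.algebraMap_bijective_of_isIntegral.2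

theorem exists_isMaximal_disjoint_of_rank_le_aleph0 {K A : Type*} [Field K] [IsAlgClosed K]
    [Uncountable K] [CommRing A] [Algebra K A] (hA : Module.rank K A ≤ ℵ₀) (S : Submonoid A)
    (hS : (S : Set A).Countable) (h0 : (0 : A) ∉ S) :
    ∃ M : Ideal A, M.IsMaximal ∧ Disjoint (M : Set A) S := by
  have : Nontrivial (Localization S) :=
    not_subsingleton_iff_nontrivial.mp (IsLocalization.subsingleton_iff.not.mpr h0)
  obtain ⟨m, hm⟩ := Ideal.exists_maximal (Localization S)
  let := Ideal.Quotient.field m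
  have hrank : Module.rank K (Localization S ⧸ m) ≤ ℵ₀ := calc
    _ ≤ Module.rank K (Localization S) :=
      (Ideal.Quotient.mkₐ K m).toLinearMap.rank_le_of_surjective Ideal.Quotient.mk_surjective
    _ ≤ #S * Module.rank K A := Localization.rank_le_cardinalMk_mul S
    _ ≤ ℵ₀ * ℵ₀ := mul_le_mul' (mk_le_aleph0_iff.mpr hS.to_subtype) hA
    _ = ℵ₀ := aleph0_mul_aleph0
  have hK := IsAlgClosed.algebraMap_surjective_of_rank_le_aleph0 hrank
  let f : A →+* Localization S ⧸ m := (Ideal.Quotient.mk m).comp (algebraMap A _)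
  have hf : Function.Surjective f := fun y => by
    obtain ⟨c, rfl⟩ := hK y
    exact ⟨algebraMap K A c, by simp [f, ← IsScalarTower.algebraMap_apply]⟩
  refine ⟨RingHom.ker f, RingHom.ker_isMaximal_of_surjective f hf,
    Set.disjoint_left.mpr fun a ha haS => ?_⟩
  exact ((IsLocalization.map_units (Localization S) ⟨a, haS⟩).map (Ideal.Quotient.mk m)).ne_zero ha

theorem exists_isMaximal_forall_notMem_of_ne_zero {K A ι : Type*} [Field K] [IsAlgClosed K]
    [Uncountable K] [CommRing A] [IsDomain A] [Algebra K A] [Countable ι]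
    (hA : Module.rank K A ≤ ℵ₀) (a : ι → A) (ha : ∀ i, a i ≠ 0) :
    ∃ M : Ideal A, M.IsMaximal ∧ ∀ i, a i ∉ M := by
  have h0 : (0 : A) ∉ Submonoid.closure (Set.range a) := fun h =>
    zero_notMem_nonZeroDivisors <| Submonoid.closure_le.mpr
      (Set.range_subset_iff.mpr fun i => mem_nonZeroDivisors_of_ne_zero (ha i)) h
  obtain ⟨M, hM, hdisj⟩ := exists_isMaximal_disjoint_of_rank_le_aleph0 (K := K) hA _
    (Submonoid.countable_closure (Set.countable_range a)) h0
  exact ⟨M, hM, fun i hi => Set.disjoint_left.mp hdisj hi (Submonoid.subset_closure ⟨i, rfl⟩)⟩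

theorem MaximalSpectrum.exists_ne_zero_forall_mem_of_isClosed_ne_univ {R : Type*} [CommRing R]
    {Z : Set (MaximalSpectrum R)} (hZ : IsClosed Z) (hne : Z ≠ Set.univ) :
    ∃ a : R, a ≠ 0 ∧ ∀ x ∈ Z, a ∈ x.asIdeal := by
  obtain ⟨C, hC, rfl⟩ := isClosed_induced_iff.mp hZ
  obtain ⟨s, rfl⟩ := (PrimeSpectrum.isClosed_iff_zeroLocus C).mp hC
  obtain ⟨x, hx⟩ := Set.ne_univ_iff_exists_notMem _ |>.mp hne
  obtain ⟨a, has, hax⟩ := Set.not_subset.mp hx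
  exact ⟨a, fun h => hax (h ▸ x.asIdeal.zero_mem), fun y hy => hy has⟩

/-- The maximal spectrum of a finitely generated ℂ-algebra that is an integral domain
is not the union of countably many proper Zariski-closed subsets: if countably many
closed subsets cover it, one of them is everything.  (Key uncountability fact used in
Lemmas 2.1, 2.2 and 2.3 of the paper.) -/
theorem maximalSpectrum_not_countable_union_of_proper_closed
    (A : Type*) [CommRing A] [IsDomain A] [Algebra ℂ A] [Algebra.FiniteType ℂ A]
    (Z : ℕ → Set (MaximalSpectrum A))
    (hclosed : ∀ n, IsClosed (Z n))
    (hcover : (⋃ n, Z n) = Set.univ) :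
    ∃ n, Z n = Set.univ := by
  by_contra! hne
  choose a ha0 haZ using fun n =>
    MaximalSpectrum.exists_ne_zero_forall_mem_of_isClosed_ne_univ (hclosed n) (hne n)
  obtain ⟨M, hM, haM⟩ := exists_isMaximal_forall_notMem_of_ne_zero
    (Algebra.FiniteType.rank_le_aleph0 ℂ A) a ha0
  obtain ⟨n, hn⟩ := Set.mem_iUnion.mp (hcover ▸ Set.mem_univ (⟨M, hM⟩ : MaximalSpectrum A))
  exact haM n (haZ n _ hn)
end

section
/- Let X be a topological space and let (Xₙ)_{n∈ℕ} and (X′ₙ)_{n∈ℕ} be two increasing sequences of closed subsets of X, each with union X. Assume that every Xₙ and every X′ₙ has finitely many irreducible components, and that no irreducible component of any Xₙ or of any X′ₙ is the union of countably many subsets that are closed and proper in it. Then the two filtrations are equivalent: for every n there exists m with Xₙ ⊆ X′ₘ, and for every n there exists m with X′ₙ ⊆ Xₘ. (This is the topological content of Lemma 2.1 of the paper; the countable-union hypothesis is satisfied when the pieces are complex quasiprojective varieties.) -/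
/-- `C` is an irreducible component of the subspace `Y`: a maximal irreducible
subset of `Y` (such a set is automatically closed in `Y`). -/
def IsIrreducibleComponentOf {X : Type*} [TopologicalSpace X] (C Y : Set X) : Prop :=
  Maximal (fun s => s ⊆ Y ∧ IsIrreducible s) C

lemma exists_component_of_mem {X : Type*} [TopologicalSpace X] (Y : Set X) {x : X}
    (hx : x ∈ Y) : ∃ C, IsIrreducibleComponentOf C Y ∧ x ∈ C := by
  obtain ⟨m, hxm, hm⟩ :=
    zorn_subset_nonempty {s : Set X | s ⊆ Y ∧ IsIrreducible s}
      (fun c hc hcc hne => by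
        refine ⟨⋃₀ c, ⟨?_, ⟨?_, ?_⟩⟩, fun s hs => Set.subset_sUnion_of_mem hs⟩
        · exact Set.sUnion_subset fun s hs => (hc hs).1
        · obtain ⟨s, hs⟩ := hne
          obtain ⟨y, hy⟩ := (hc hs).2.1
          exact ⟨y, s, hs, hy⟩
        · rintro u v hu hv ⟨y, hy, hyu⟩ ⟨z, hz, hzv⟩
          obtain ⟨p, hpc, hyp⟩ := Set.mem_sUnion.1 hy
          obtain ⟨q, hqc, hzq⟩ := Set.mem_sUnion.1 hz
          rcases hcc.total hpc hqc with hpq | hqp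
          · obtain ⟨w, hwp, hw⟩ := (hc hqc).2.2 u v hu hv ⟨y, hpq hyp, hyu⟩ ⟨z, hzq, hzv⟩
            exact ⟨w, Set.mem_sUnion_of_mem hwp hqc, hw⟩
          · obtain ⟨w, hwp, hw⟩ := (hc hpc).2.2 u v hu hv ⟨y, hyp, hyu⟩ ⟨z, hqp hzq, hzv⟩
            exact ⟨w, Set.mem_sUnion_of_mem hwp hpc, hw⟩)
      {x} ⟨Set.singleton_subset_iff.2 hx, isIrreducible_singleton⟩
  exact ⟨m, hm, hxm rfl⟩

lemma component_subset {X : Type*} [TopologicalSpace X]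
    (G : ℕ → Set X) (hGunion : (⋃ n, G n) = Set.univ) (hGclosed : ∀ n, IsClosed (G n))
    {C Y : Set X} (hC : IsIrreducibleComponentOf C Y)
    (hcount : ¬ ∃ f : ℕ → Set X,
        (∀ k, (∃ W, IsClosed W ∧ f k = C ∩ W) ∧ f k ≠ C) ∧ C ⊆ ⋃ k, f k) :
    ∃ m, C ⊆ G m := by
  by_contra h
  push_neg at h
  refine hcount ⟨fun k => C ∩ G k, fun k => ⟨⟨G k, hGclosed k, rfl⟩, ?_⟩, ?_⟩
  · intro hk
    exact h k (by rw [← hk]; exact Set.inter_subset_right)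
  · intro x hxC
    have : x ∈ ⋃ n, G n := hGunion ▸ Set.mem_univ x
    obtain ⟨n, hn⟩ := Set.mem_iUnion.1 this
    exact Set.mem_iUnion.2 ⟨n, hxC, hn⟩

lemma half {X : Type*} [TopologicalSpace X] (F G : ℕ → Set X)
    (hGmono : Monotone G) (hGclosed : ∀ n, IsClosed (G n))
    (hGunion : (⋃ n, G n) = Set.univ)
    (hFfin : ∀ n, {C | IsIrreducibleComponentOf C (F n)}.Finite)
    (hFcount : ∀ n, ∀ C, IsIrreducibleComponentOf C (F n) →
      ¬ ∃ f : ℕ → Set X,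
        (∀ k, (∃ W, IsClosed W ∧ f k = C ∩ W) ∧ f k ≠ C) ∧ C ⊆ ⋃ k, f k) :
    ∀ n, ∃ m, F n ⊆ G m := by
  intro n
  have key : ∀ C ∈ {C | IsIrreducibleComponentOf C (F n)}, ∃ m, C ⊆ G m := fun C hC =>
    component_subset G hGunion hGclosed hC (hFcount n C hC)
  choose! g hg using key
  obtain ⟨M, hM⟩ := ((hFfin n).image g).bddAbove
  refine ⟨M, fun x hx => ?_⟩
  obtain ⟨C, hC, hxC⟩ := exists_component_of_mem (F n) hx
  exact hGmono (hM (Set.mem_image_of_mem g hC)) (hg C hC hxC)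

/-- Lemma 2.1 (topological content): two increasing filtrations of `X` by closed
subsets, each piece having finitely many irreducible components, none of which is a
countable union of proper relatively closed subsets, are equivalent filtrations. -/
theorem filtrations_equivalent
    (X : Type*) [TopologicalSpace X]
    (F G : ℕ → Set X)
    (hFmono : Monotone F) (hGmono : Monotone G)
    (hFclosed : ∀ n, IsClosed (F n)) (hGclosed : ∀ n, IsClosed (G n))
    (hFunion : (⋃ n, F n) = Set.univ) (hGunion : (⋃ n, G n) = Set.univ)
    (hFfin : ∀ n, {C | IsIrreducibleComponentOf C (F n)}.Finite)
    (hGfin : ∀ n, {C | IsIrreducibleComponentOf C (G n)}.Finite)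
    (hFcount : ∀ n, ∀ C, IsIrreducibleComponentOf C (F n) →
      ¬ ∃ f : ℕ → Set X,
        (∀ k, (∃ W, IsClosed W ∧ f k = C ∩ W) ∧ f k ≠ C) ∧ C ⊆ ⋃ k, f k)
    (hGcount : ∀ n, ∀ C, IsIrreducibleComponentOf C (G n) →
      ¬ ∃ f : ℕ → Set X,
        (∀ k, (∃ W, IsClosed W ∧ f k = C ∩ W) ∧ f k ≠ C) ∧ C ⊆ ⋃ k, f k) :
    (∀ n, ∃ m, F n ⊆ G m) ∧ (∀ n, ∃ m, G n ⊆ F m) := by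
  exact ⟨half F G hGmono hGclosed hGunion hFfin hFcount,
         half G F hFmono hFclosed hFunion hGfin hGcount⟩
end

section
/- Let X be a topological space and (Xₙ)_{n∈ℕ} an increasing sequence of closed subsets of X with union X, each Xₙ having finitely many irreducible components. Assume that the poset, ordered by inclusion, of all irreducible components of all the Xₙ is directed (any two elements have a common upper bound). Then X admits an equivalent filtration by irreducible closed subsets: there is an increasing sequence (Cₖ)_{k∈ℕ} of irreducible closed subsets of X with union X such that every Xₙ is contained in some Cₖ and every Cₖ is contained in some Xₘ. (This is the implication (i) ⇒ (iii) of Lemma 2.2 of the paper, characterizing ind-irreducible ind-varieties.) -/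
open Set

section Directed

variable {α : Type*} [Preorder α] {T : Set α}

theorem DirectedOn.exists_mem_forall_le_of_finite (hT : DirectedOn (· ≤ ·) T)
    (hne : T.Nonempty) {s : Set α} (hs : s.Finite) (hsT : s ⊆ T) :
    ∃ d ∈ T, ∀ t ∈ s, t ≤ d := by
  have := hne.coe_sort
  obtain ⟨d, hd⟩ := (directedOn_iff_directed.1 hT).finite_set_le
    (hs.preimage Subtype.val_injective.injOn)
  exact ⟨d, d.2, fun t ht => hd ⟨t, hsT ht⟩ ht⟩

theorem DirectedOn.exists_monotone_seq_ge (hT : DirectedOn (· ≤ ·) T) {f : ℕ → α}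
    (hf : ∀ n, ∃ t ∈ T, f n ≤ t) :
    ∃ g : ℕ → α, Monotone g ∧ (∀ n, g n ∈ T) ∧ ∀ n, f n ≤ g n := by
  choose t htT hft using hf
  choose ub hubT hub_left hub_right using hT
  let g : ℕ → T := fun n => Nat.rec ⟨t 0, htT 0⟩
    (fun n c => ⟨ub (t (n + 1)) (htT _) c c.2, hubT _ _ _ _⟩) n
  refine ⟨fun n => (g n).1, monotone_nat_of_le_succ fun n => hub_right _ _ _ _,
    fun n => (g n).2, ?_⟩
  rintro (_ | n)
  · exact hft 0
  · exact (hft _).trans (hub_left _ _ _ _)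

end Directed

section Irreducible

variable {X : Type*} [TopologicalSpace X]

theorem DirectedOn.isPreirreducible_sUnion {c : Set (Set X)} (hc : DirectedOn (· ⊆ ·) c)
    (h : ∀ s ∈ c, IsPreirreducible s) : IsPreirreducible (⋃₀ c) := by
  rintro u v hu hv ⟨y, ⟨p, hp, hyp⟩, hyu⟩ ⟨z, ⟨q, hq, hzq⟩, hzv⟩
  obtain ⟨r, hr, hpr, hqr⟩ := hc p hp q hq
  obtain ⟨w, hwr, hwuv⟩ := h r hr u v hu hv ⟨y, hpr hyp, hyu⟩ ⟨z, hqr hzq, hzv⟩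
  exact ⟨w, ⟨r, hr, hwr⟩, hwuv⟩

theorem exists_isIrreducibleComponentOf_mem {Y : Set X} {x : X} (hx : x ∈ Y) :
    ∃ C, IsIrreducibleComponentOf C Y ∧ x ∈ C := by
  obtain ⟨C, hxC, hC⟩ := zorn_subset_nonempty {s | s ⊆ Y ∧ IsIrreducible s}
    (fun c hcY hc ⟨s, hs⟩ =>
      ⟨⋃₀ c, ⟨sUnion_subset fun s hs => (hcY hs).1,
        (hcY hs).2.nonempty.mono (subset_sUnion_of_mem hs),
        hc.directedOn.isPreirreducible_sUnion fun s hs => (hcY hs).2.2⟩,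
        fun _ => subset_sUnion_of_mem⟩)
    {x} ⟨singleton_subset_iff.2 hx, isIrreducible_singleton⟩
  exact ⟨C, hC, hxC rfl⟩

theorem IsIrreducibleComponentOf.isClosed {C Y : Set X} (h : IsIrreducibleComponentOf C Y)
    (hY : IsClosed Y) : IsClosed C :=
  closure_subset_iff_isClosed.1 <|
    h.le_of_ge ⟨hY.closure_subset_iff.2 h.prop.1, h.prop.2.closure⟩ subset_closure

theorem exists_mem_superset_of_finite_isIrreducibleComponentOf {T : Set (Set X)}
    (hT : DirectedOn (· ⊆ ·) T) (hne : T.Nonempty) {Y : Set X}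
    (hfin : {C | IsIrreducibleComponentOf C Y}.Finite)
    (hYT : ∀ C, IsIrreducibleComponentOf C Y → C ∈ T) :
    ∃ D ∈ T, Y ⊆ D := by
  obtain ⟨D, hDT, hCD⟩ := hT.exists_mem_forall_le_of_finite hne hfin hYT
  refine ⟨D, hDT, fun y hy => ?_⟩
  obtain ⟨C, hC, hyC⟩ := exists_isIrreducibleComponentOf_mem hy
  exact hCD C hC hyC

end Irreducible

theorem exists_irreducible_equivalent_filtration_general
    (X : Type*) [TopologicalSpace X] [Nonempty X]
    (F : ℕ → Set X) (hclosed : ∀ n, IsClosed (F n))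
    (hunion : (⋃ n, F n) = Set.univ)
    (hfin : ∀ n, {C | IsIrreducibleComponentOf C (F n)}.Finite)
    (hdir : ∀ C₁ C₂ : Set X,
      (∃ n, IsIrreducibleComponentOf C₁ (F n)) →
      (∃ n, IsIrreducibleComponentOf C₂ (F n)) →
      ∃ C₃, (∃ n, IsIrreducibleComponentOf C₃ (F n)) ∧ C₁ ⊆ C₃ ∧ C₂ ⊆ C₃) :
    ∃ C : ℕ → Set X, Monotone C ∧
      (∀ k, IsClosed (C k) ∧ IsIrreducible (C k)) ∧
      (⋃ k, C k) = Set.univ ∧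
      (∀ n, ∃ k, F n ⊆ C k) ∧ (∀ k, ∃ m, C k ⊆ F m) := by
  set T : Set (Set X) := {C | ∃ n, IsIrreducibleComponentOf C (F n)}
  have hT : DirectedOn (· ⊆ ·) T := fun C₁ h₁ C₂ h₂ => hdir C₁ C₂ h₁ h₂
  have hTne : T.Nonempty := by
    obtain ⟨x⟩ := ‹Nonempty X›
    obtain ⟨n, hx⟩ := mem_iUnion.1 (hunion.symm ▸ mem_univ x)
    obtain ⟨C, hC, -⟩ := exists_isIrreducibleComponentOf_mem hx
    exact ⟨C, n, hC⟩
  have hFT : ∀ n, ∃ D ∈ T, F n ⊆ D := fun n =>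
    exists_mem_superset_of_finite_isIrreducibleComponentOf hT hTne (hfin n) fun _ hC => ⟨n, hC⟩
  obtain ⟨C, hCmono, hCT, hFC⟩ := hT.exists_monotone_seq_ge hFT
  choose m hm using hCT
  refine ⟨C, hCmono, fun k => ⟨(hm k).isClosed (hclosed _), (hm k).prop.2⟩,
    eq_univ_of_univ_subset (hunion ▸ iUnion_mono hFC), fun n => ⟨n, hFC n⟩,
    fun k => ⟨m k, (hm k).prop.1⟩⟩

/-- Lemma 2.2, (i) ⇒ (iii): if `X` is filtered by an increasing sequence of closed
subsets, each with finitely many irreducible components, and the poset of all these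
irreducible components is directed, then `X` admits an equivalent filtration by
irreducible closed subsets. -/
theorem exists_irreducible_equivalent_filtration
    (X : Type*) [TopologicalSpace X] [Nonempty X]
    (F : ℕ → Set X) (hmono : Monotone F) (hclosed : ∀ n, IsClosed (F n))
    (hunion : (⋃ n, F n) = Set.univ)
    (hfin : ∀ n, {C | IsIrreducibleComponentOf C (F n)}.Finite)
    (hdir : ∀ C₁ C₂ : Set X,
      (∃ n, IsIrreducibleComponentOf C₁ (F n)) →
      (∃ n, IsIrreducibleComponentOf C₂ (F n)) →
      ∃ C₃, (∃ n, IsIrreducibleComponentOf C₃ (F n)) ∧ C₁ ⊆ C₃ ∧ C₂ ⊆ C₃) :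
    ∃ C : ℕ → Set X, Monotone C ∧
      (∀ k, IsClosed (C k) ∧ IsIrreducible (C k)) ∧
      (⋃ k, C k) = Set.univ ∧
      (∀ n, ∃ k, F n ⊆ C k) ∧ (∀ k, ∃ m, C k ⊆ F m) :=
  exists_irreducible_equivalent_filtration_general X F hclosed hunion hfin hdir
end

section
/- Let X be a topological space and (Xₙ)_{n∈ℕ} an increasing sequence of irreducible closed subsets of X with union X. Let (X′ₙ)_{n∈ℕ} be an equivalent filtration of X: an increasing sequence of closed subsets with union X such that every Xₙ is contained in some X′ₘ and every X′ₙ is contained in some Xₘ. Then the poset of irreducible components of the X′ₙ's is directed: for any irreducible component C₁ of some X′_{n₁} and any irreducible component C₂ of some X′_{n₂}, there exist m and an irreducible component C of X′ₘ with C₁ ∪ C₂ ⊆ C. (This is the implication (iii) ⇒ (ii) of Lemma 2.2 of the paper.) -/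
theorem exists_component_containing {X : Type*} [TopologicalSpace X] (Y s : Set X)
    (hs : IsIrreducible s) (hsY : s ⊆ Y) :
    ∃ C, IsIrreducibleComponentOf C Y ∧ s ⊆ C := by
  obtain ⟨m, hsm, hm⟩ :=
    zorn_subset_nonempty { t : Set X | t ⊆ Y ∧ IsPreirreducible t }
      (fun c hc hcc _ =>
        ⟨⋃₀ c,
          ⟨Set.sUnion_subset fun t ht => (hc ht).1,
           fun u v hu hv ⟨y, hy, hyu⟩ ⟨x, hx, hxv⟩ =>
            let ⟨p, hpc, hyp⟩ := Set.mem_sUnion.1 hy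
            let ⟨q, hqc, hxq⟩ := Set.mem_sUnion.1 hx
            Or.casesOn (hcc.total hpc hqc)
              (fun hpq : p ⊆ q =>
                let ⟨x, hxp, hxuv⟩ := (hc hqc).2 u v hu hv ⟨y, hpq hyp, hyu⟩ ⟨x, hxq, hxv⟩
                ⟨x, Set.mem_sUnion_of_mem hxp hqc, hxuv⟩)
              fun hqp : q ⊆ p =>
              let ⟨x, hxp, hxuv⟩ := (hc hpc).2 u v hu hv ⟨y, hyp, hyu⟩ ⟨x, hqp hxq, hxv⟩
              ⟨x, Set.mem_sUnion_of_mem hxp hpc, hxuv⟩⟩,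
          fun _ hxc => Set.subset_sUnion_of_mem hxc⟩)
      s ⟨hsY, hs.2⟩
  refine ⟨m, ⟨⟨hm.prop.1, ⟨hs.1.mono hsm, hm.prop.2⟩⟩, ?_⟩, hsm⟩
  intro u hu hmu
  exact hm.2 ⟨hu.1, hu.2.2⟩ hmu

/-- Lemma 2.2, (iii) ⇒ (ii): if `X` has a filtration by irreducible closed subsets
`Fₙ`, then for any equivalent filtration `Gₙ` by closed subsets, the poset of
irreducible components of the `Gₙ`'s is directed. -/
theorem components_directed_of_equivalent_irreducible_filtration
    (X : Type*) [TopologicalSpace X]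
    (F G : ℕ → Set X)
    (hFmono : Monotone F) (hFclosed : ∀ n, IsClosed (F n))
    (hFirr : ∀ n, IsIrreducible (F n)) (hFunion : (⋃ n, F n) = Set.univ)
    (hGmono : Monotone G) (hGclosed : ∀ n, IsClosed (G n))
    (hGunion : (⋃ n, G n) = Set.univ)
    (hFG : ∀ n, ∃ m, F n ⊆ G m) (hGF : ∀ n, ∃ m, G n ⊆ F m)
    (n₁ n₂ : ℕ) (C₁ C₂ : Set X)
    (h₁ : IsIrreducibleComponentOf C₁ (G n₁))
    (h₂ : IsIrreducibleComponentOf C₂ (G n₂)) :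
    ∃ m C, IsIrreducibleComponentOf C (G m) ∧ C₁ ⊆ C ∧ C₂ ⊆ C := by
  obtain ⟨m₁, hm₁⟩ := hGF n₁
  obtain ⟨m₂, hm₂⟩ := hGF n₂
  set k := max m₁ m₂
  have hC₁F : C₁ ⊆ F k := (h₁.prop.1.trans hm₁).trans (hFmono (le_max_left _ _))
  have hC₂F : C₂ ⊆ F k := (h₂.prop.1.trans hm₂).trans (hFmono (le_max_right _ _))
  obtain ⟨m, hm⟩ := hFG k
  obtain ⟨C, hC, hFC⟩ := exists_component_containing (G m) (F k) (hFirr k) hm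
  exact ⟨m, C, hC, hC₁F.trans hFC, hC₂F.trans hFC⟩
end
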